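/- arXiv:1402.3396 — 2 statements merged into one kernel-verified Lean document; each statement's English description precedes it below -/
import Mathlib

section
/- Let $A, B$ be nonzero complex numbers with $|A| \leq |B|(1-\gamma)$ for some $\gamma \in (0,1)$, let $\gamma_0 > 0$, and let $g(X,Y) = (AX + R(X,Y), BY + U(X,Y))$ be a $C^1$ map on a ball $B(0,r) \subset \mathbb{C}^2$ with $g(0,0) = (0,0)$. Set $\|Dh\| := \sup_{z \in B(0,r)} \max(\|DR(z)\|, \|DU(z)\|)$ and assume $\|Dh\| |B|^{-1}(1+\gamma_0) < 1$. Let $\Phi: D \to \mathbb{C}$, $D \subset \mathbb{C}$, be $\gamma_0$-Lipschitz with graph $\{(\Phi(Y), Y): Y \in D\} \subset B(0,r)$. Then the image of this graph under $g$ is again a graph $\{(\Psi(Y), Y)\}$ over the projection of the image to the second coordinate, and $\Psi$ is Lipschitz with constant at most $(|A|\gamma_0 + \|Dh\|(1+\gamma_0))/(|B| - \|Dh\|(1+\gamma_0))$. -/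
open Metric

/-- The graph `{(Φ Y, Y) : Y ∈ D}` of a function over the second coordinate. -/
def graphOf (Φ : ℂ → ℂ) (D : Set ℂ) : Set (ℂ × ℂ) :=
  (fun Y => ((Φ Y, Y) : ℂ × ℂ)) '' D

open Set Function

/-! Along the graph, `g` reads `Y ↦ (F Y, π Y)` with `F Y = A Φ(Y) + R(Φ Y, Y)` and
`π Y = B Y + U(Φ Y, Y)`. By the mean value inequality `R` and `U` are `Dh`-Lipschitz on the ball,
and `Y ↦ (Φ Y, Y)` is `(1+γ₀)`-Lipschitz, so `F` is `(|A|γ₀ + Dh(1+γ₀))`-Lipschitz while `π`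
expands distances by a factor at least `|B| - Dh(1+γ₀) > 0`. Hence `π` is injective on `D` and
the image is the graph of `F ∘ π⁻¹` over `π(D)`. -/

theorem DifferentiableOn.norm_sub_le_of_norm_fderiv_le {𝕜 E G : Type*} [RCLike 𝕜]
    [NormedAddCommGroup E] [NormedSpace ℝ E] [NormedSpace 𝕜 E]
    [NormedAddCommGroup G] [NormedSpace 𝕜 G] {f : E → G} {s : Set E} {C : ℝ}
    (hf : DifferentiableOn 𝕜 f s) (hs : IsOpen s) (hconv : Convex ℝ s)
    (bound : ∀ z ∈ s, ‖fderiv 𝕜 f z‖ ≤ C) {p q : E} (hp : p ∈ s) (hq : q ∈ s) :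
    ‖f p - f q‖ ≤ C * ‖p - q‖ :=
  hconv.norm_image_sub_le_of_norm_fderiv_le
    (fun _ hz => hf.differentiableAt (hs.mem_nhds hz)) bound hq hp

theorem norm_prodMk_sub_le {E F : Type*} [SeminormedAddCommGroup E] [SeminormedAddCommGroup F]
    {x₁ x₂ : E} {y₁ y₂ : F} {γ₀ : ℝ} (hγ₀ : 0 ≤ γ₀) (hx : ‖x₁ - x₂‖ ≤ γ₀ * ‖y₁ - y₂‖) :
    ‖(x₁, y₁) - (x₂, y₂)‖ ≤ (1 + γ₀) * ‖y₁ - y₂‖ := by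
  have := norm_nonneg (y₁ - y₂)
  rw [Prod.mk_sub_mk, Prod.norm_mk]
  exact max_le (by nlinarith) (by nlinarith)

theorem norm_sub_le_along_graph {E F G : Type*} [SeminormedAddCommGroup E]
    [SeminormedAddCommGroup F] [SeminormedAddCommGroup G] {f : E × F → G} {Φ : F → E}
    {s : Set (E × F)} {D : Set F} {C γ₀ : ℝ} (hC : 0 ≤ C) (hγ₀ : 0 ≤ γ₀)
    (hf : ∀ p ∈ s, ∀ q ∈ s, ‖f p - f q‖ ≤ C * ‖p - q‖)
    (hΦ : ∀ Y₁ ∈ D, ∀ Y₂ ∈ D, ‖Φ Y₁ - Φ Y₂‖ ≤ γ₀ * ‖Y₁ - Y₂‖)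
    (hgraph : ∀ Y ∈ D, (Φ Y, Y) ∈ s) :
    ∀ Y₁ ∈ D, ∀ Y₂ ∈ D, ‖f (Φ Y₁, Y₁) - f (Φ Y₂, Y₂)‖ ≤ C * (1 + γ₀) * ‖Y₁ - Y₂‖ := by
  intro Y₁ h₁ Y₂ h₂
  calc ‖f (Φ Y₁, Y₁) - f (Φ Y₂, Y₂)‖ ≤ C * ‖(Φ Y₁, Y₁) - (Φ Y₂, Y₂)‖ :=
        hf _ (hgraph Y₁ h₁) _ (hgraph Y₂ h₂)
    _ ≤ C * ((1 + γ₀) * ‖Y₁ - Y₂‖) :=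
        mul_le_mul_of_nonneg_left (norm_prodMk_sub_le hγ₀ (hΦ Y₁ h₁ Y₂ h₂)) hC
    _ = C * (1 + γ₀) * ‖Y₁ - Y₂‖ := (mul_assoc _ _ _).symm

section LinearPlusPerturbation

variable {𝕜 : Type*} [NormedDivisionRing 𝕜] (a x₁ x₂ u₁ u₂ : 𝕜)

theorem norm_mul_add_sub_mul_add_le :
    ‖(a * x₁ + u₁) - (a * x₂ + u₂)‖ ≤ ‖a‖ * ‖x₁ - x₂‖ + ‖u₁ - u₂‖ := by
  rw [add_sub_add_comm, ← mul_sub, ← norm_mul]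
  exact norm_add_le _ _

theorem norm_mul_sub_sub_le_norm_mul_add_sub_mul_add :
    ‖a‖ * ‖x₁ - x₂‖ - ‖u₁ - u₂‖ ≤ ‖(a * x₁ + u₁) - (a * x₂ + u₂)‖ := by
  rw [add_sub_add_comm, ← mul_sub, ← norm_mul]
  exact norm_sub_le_norm_add _ _

end LinearPlusPerturbation

theorem Set.injOn_of_mul_norm_sub_le {α β : Type*} [NormedAddCommGroup α]
    [SeminormedAddCommGroup β] {π : α → β} {D : Set α} {c : ℝ} (hc : 0 < c)
    (hπ : ∀ Y₁ ∈ D, ∀ Y₂ ∈ D, c * ‖Y₁ - Y₂‖ ≤ ‖π Y₁ - π Y₂‖) : InjOn π D := by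
  intro Y₁ h₁ Y₂ h₂ h
  have := hπ Y₁ h₁ Y₂ h₂
  rw [h, sub_self, norm_zero] at this
  exact sub_eq_zero.mp (norm_le_zero_iff.mp (nonpos_of_mul_nonpos_right this hc))

theorem exists_image_eq_graphOf_of_mul_norm_sub_le {F π : ℂ → ℂ} {D : Set ℂ} {N c : ℝ}
    (hN : 0 ≤ N) (hc : 0 < c)
    (hF : ∀ Y₁ ∈ D, ∀ Y₂ ∈ D, ‖F Y₁ - F Y₂‖ ≤ N * ‖Y₁ - Y₂‖)
    (hπ : ∀ Y₁ ∈ D, ∀ Y₂ ∈ D, c * ‖Y₁ - Y₂‖ ≤ ‖π Y₁ - π Y₂‖) :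
    ∃ Ψ : ℂ → ℂ, (fun Y => (F Y, π Y)) '' D = graphOf Ψ (π '' D) ∧
      ∀ w₁ ∈ π '' D, ∀ w₂ ∈ π '' D, ‖Ψ w₁ - Ψ w₂‖ ≤ N / c * ‖w₁ - w₂‖ := by
  have hinv := (injOn_of_mul_norm_sub_le hc hπ).leftInvOn_invFunOn
  refine ⟨F ∘ invFunOn π D, ?_, ?_⟩
  · rw [graphOf, image_image]
    exact image_congr fun Y hY => by simp only [comp_apply, hinv hY]
  · rintro _ ⟨Y₁, hY₁, rfl⟩ _ ⟨Y₂, hY₂, rfl⟩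
    simp only [comp_apply, hinv hY₁, hinv hY₂]
    calc ‖F Y₁ - F Y₂‖ ≤ N * ‖Y₁ - Y₂‖ := hF Y₁ hY₁ Y₂ hY₂
      _ = N / c * (c * ‖Y₁ - Y₂‖) := by field_simp
      _ ≤ N / c * ‖π Y₁ - π Y₂‖ :=
          mul_le_mul_of_nonneg_left (hπ Y₁ hY₁ Y₂ hY₂) (div_nonneg hN hc.le)

theorem stmt4_general (A B : ℂ) (hB : B ≠ 0) (γ₀ r Dh : ℝ)
    (hγ₀ : 0 < γ₀) (hDh0 : 0 ≤ Dh)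
    (R U : ℂ × ℂ → ℂ)
    (hR : ContDiffOn ℂ 1 R (ball 0 r)) (hU : ContDiffOn ℂ 1 U (ball 0 r))
    (g : ℂ × ℂ → ℂ × ℂ) (hg : ∀ z, g z = (A * z.1 + R z, B * z.2 + U z))
    (hDh : ∀ z ∈ ball (0 : ℂ × ℂ) r, ‖fderiv ℂ R z‖ ≤ Dh ∧ ‖fderiv ℂ U z‖ ≤ Dh)
    (hsmall : Dh * ‖B‖⁻¹ * (1 + γ₀) < 1)
    (Φ : ℂ → ℂ) (D : Set ℂ)
    (hΦ : ∀ Y₁ ∈ D, ∀ Y₂ ∈ D, ‖Φ Y₁ - Φ Y₂‖ ≤ γ₀ * ‖Y₁ - Y₂‖)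
    (hgraph : graphOf Φ D ⊆ ball 0 r) :
    ∃ Ψ : ℂ → ℂ,
      g '' graphOf Φ D = graphOf Ψ (Prod.snd '' (g '' graphOf Φ D)) ∧
      ∀ Y₁ ∈ Prod.snd '' (g '' graphOf Φ D), ∀ Y₂ ∈ Prod.snd '' (g '' graphOf Φ D),
        ‖Ψ Y₁ - Ψ Y₂‖ ≤ (‖A‖ * γ₀ + Dh * (1 + γ₀)) / (‖B‖ - Dh * (1 + γ₀)) * ‖Y₁ - Y₂‖ := by
  have hKB : Dh * (1 + γ₀) < ‖B‖ := by
    rwa [mul_right_comm, ← div_eq_mul_inv, div_lt_one (norm_pos_iff.mpr hB)] at hsmall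
  have hon_graph : ∀ Y ∈ D, (Φ Y, Y) ∈ ball (0 : ℂ × ℂ) r := fun Y hY => hgraph ⟨Y, hY, rfl⟩
  have lipschitz_along_graph : ∀ f : ℂ × ℂ → ℂ, ContDiffOn ℂ 1 f (ball 0 r) →
      (∀ z ∈ ball (0 : ℂ × ℂ) r, ‖fderiv ℂ f z‖ ≤ Dh) →
      ∀ Y₁ ∈ D, ∀ Y₂ ∈ D, ‖f (Φ Y₁, Y₁) - f (Φ Y₂, Y₂)‖ ≤ Dh * (1 + γ₀) * ‖Y₁ - Y₂‖ :=
    fun f hf bound => norm_sub_le_along_graph hDh0 hγ₀.le (fun p hp q hq =>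
      (hf.differentiableOn one_ne_zero).norm_sub_le_of_norm_fderiv_le isOpen_ball
        (convex_ball 0 r) bound hp hq) hΦ hon_graph
  have hR' := lipschitz_along_graph R hR fun z hz => (hDh z hz).1
  have hU' := lipschitz_along_graph U hU fun z hz => (hDh z hz).2
  have him : g '' graphOf Φ D =
      (fun Y => (A * Φ Y + R (Φ Y, Y), B * Y + U (Φ Y, Y))) '' D := by
    rw [graphOf, image_image]
    exact image_congr fun Y _ => hg _
  rw [him, image_image]
  refine exists_image_eq_graphOf_of_mul_norm_sub_le (by positivity) (sub_pos.mpr hKB)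
    (fun Y₁ h₁ Y₂ h₂ => ?_) (fun Y₁ h₁ Y₂ h₂ => ?_)
  · have := hΦ Y₁ h₁ Y₂ h₂
    have := hR' Y₁ h₁ Y₂ h₂
    nlinarith [norm_mul_add_sub_mul_add_le A (Φ Y₁) (Φ Y₂) (R (Φ Y₁, Y₁)) (R (Φ Y₂, Y₂)),
      norm_nonneg A]
  · have := hU' Y₁ h₁ Y₂ h₂
    nlinarith [norm_mul_sub_sub_le_norm_mul_add_sub_mul_add B Y₁ Y₂ (U (Φ Y₁, Y₁))
      (U (Φ Y₂, Y₂))]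

/-- Graph transform theorem (main part, Theorem 4.1 of the paper): under the hypotheses on
`g(X,Y) = (AX + R(X,Y), BY + U(X,Y))`, the image of a `γ₀`-Lipschitz graph over the second
coordinate is again a graph over the projection of the image to the second coordinate, with
Lipschitz constant at most `(|A|γ₀ + ‖Dh‖(1+γ₀))/(|B| - ‖Dh‖(1+γ₀))`. -/
theorem stmt4 (A B : ℂ) (hA : A ≠ 0) (hB : B ≠ 0) (γ γ₀ r Dh : ℝ)
    (hγ : γ ∈ Set.Ioo (0:ℝ) 1) (hγ₀ : 0 < γ₀) (hr : 0 < r) (hDh0 : 0 ≤ Dh)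
    (hAB : ‖A‖ ≤ ‖B‖ * (1 - γ))
    (R U : ℂ × ℂ → ℂ)
    (hR : ContDiffOn ℂ 1 R (ball 0 r)) (hU : ContDiffOn ℂ 1 U (ball 0 r))
    (hR0 : R 0 = 0) (hU0 : U 0 = 0)
    (g : ℂ × ℂ → ℂ × ℂ) (hg : ∀ z, g z = (A * z.1 + R z, B * z.2 + U z))
    (hDh : ∀ z ∈ ball (0 : ℂ × ℂ) r, ‖fderiv ℂ R z‖ ≤ Dh ∧ ‖fderiv ℂ U z‖ ≤ Dh)
    (hsmall : Dh * ‖B‖⁻¹ * (1 + γ₀) < 1)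
    (Φ : ℂ → ℂ) (D : Set ℂ)
    (hΦ : ∀ Y₁ ∈ D, ∀ Y₂ ∈ D, ‖Φ Y₁ - Φ Y₂‖ ≤ γ₀ * ‖Y₁ - Y₂‖)
    (hgraph : graphOf Φ D ⊆ ball 0 r) :
    ∃ Ψ : ℂ → ℂ,
      g '' graphOf Φ D = graphOf Ψ (Prod.snd '' (g '' graphOf Φ D)) ∧
      ∀ Y₁ ∈ Prod.snd '' (g '' graphOf Φ D), ∀ Y₂ ∈ Prod.snd '' (g '' graphOf Φ D),
        ‖Ψ Y₁ - Ψ Y₂‖ ≤ (‖A‖ * γ₀ + Dh * (1 + γ₀)) / (‖B‖ - Dh * (1 + γ₀)) * ‖Y₁ - Y₂‖ :=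
  stmt4_general A B hB γ₀ r Dh hγ₀ hDh0 R U hR hU g hg hDh hsmall Φ D hΦ hgraph
end

section
/- Under the hypotheses of the graph transform theorem, assume additionally that $B(0, \alpha) \subset D$ and $\|\Phi(0)\| \leq \beta$. Then the projection to the second coordinate of $g(\text{graph of } \Phi)$ contains the ball $B(0, (|B| - \|Dh\|(1+\gamma_0))\alpha - |A|\beta - \|Dh\|\beta - M\beta^2)$, where $M = \|D^2 g\|_{B(0,r)}$, and the new graph function $\Psi$ satisfies $\|\Psi(0)\| \leq (1+\gamma_0)(|A|\beta + \|Dh\|\beta + M\beta^2)$, provided $\|Dh\|$ is sufficiently small depending only on $\gamma_0$ and $\gamma$. -/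
open Metric

open Set Function

/-!
The image of `(Φ Y, Y)` is `(S Y, T Y)` with `T Y = B Y + U (Φ Y, Y)`. Along the graph `U` is
`Dh (1 + γ₀)`-Lipschitz and `Dh (1 + γ₀) < |B|`, so `T` is a small Lipschitz perturbation of
multiplication by `B`. Hence `T` is injective, which makes the image a graph over `T '' D`, and
(by the surjectivity half of the Lipschitz inverse function theorem) `T` maps `B(0, α)` onto a
ball of radius `(|B| - Dh (1 + γ₀)) α` around `T 0 = U (Φ 0, 0)`, a point of size at most `Dh β`.
The new graph function at `0` is `S Y₀` with `T Y₀ = 0`; then `|B| |Y₀| ≤ Dh β + Dh (1 + γ₀) |Y₀|`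
makes `|Y₀| = O(Dh β)`, which the factor `1 + γ₀` absorbs once `Dh` is small.
-/

theorem ContDiffOn.norm_sub_le_of_norm_fderiv_le {𝕜 E F : Type*} [RCLike 𝕜]
    [NormedAddCommGroup E] [NormedSpace ℝ E] [NormedSpace 𝕜 E] [NormedAddCommGroup F]
    [NormedSpace 𝕜 F]
    {f : E → F} {s : Set E} {n : WithTop ℕ∞} {C : ℝ} (hf : ContDiffOn 𝕜 n f s) (hn : n ≠ 0)
    (hs : IsOpen s) (hsc : Convex ℝ s) (hC : ∀ z ∈ s, ‖fderiv 𝕜 f z‖ ≤ C) :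
    ∀ x ∈ s, ∀ y ∈ s, ‖f x - f y‖ ≤ C * ‖x - y‖ := fun _ hx _ hy =>
  hsc.norm_image_sub_le_of_norm_fderiv_le
    (fun z hz => (hf.differentiableOn hn z hz).differentiableAt (hs.mem_nhds hz)) hC hy hx

section SmulAddPerturbation

variable {𝕜 E : Type*} [NontriviallyNormedField 𝕜] [NormedAddCommGroup E] [NormedSpace 𝕜 E]
  {B : 𝕜} {u : E → E} {s : Set E} {L : ℝ}

theorem sub_mul_norm_sub_le_norm_smul_add_sub
    (hu : ∀ x ∈ s, ∀ y ∈ s, ‖u x - u y‖ ≤ L * ‖x - y‖) {x y : E} (hx : x ∈ s) (hy : y ∈ s) :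
    (‖B‖ - L) * ‖x - y‖ ≤ ‖(B • x + u x) - (B • y + u y)‖ := by
  have h : B • (x - y) = (B • x + u x) - (B • y + u y) - (u x - u y) := by
    rw [smul_sub]; abel
  have := norm_sub_le ((B • x + u x) - (B • y + u y)) (u x - u y)
  rw [← h, norm_smul] at this
  linarith [hu x hx y hy]

theorem surjOn_ball_smul_add [CompleteSpace E]
    (hu : ∀ x ∈ s, ∀ y ∈ s, ‖u x - u y‖ ≤ L * ‖x - y‖) (hL₀ : 0 ≤ L) (hL : L < ‖B‖)
    {b : E} {ρ : ℝ} (hρ : ball b ρ ⊆ s) :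
    SurjOn (fun x => B • x + u x) (ball b ρ) (ball (B • b + u b) ((‖B‖ - L) * ρ)) := by
  intro y hy
  have hB : B ≠ 0 := norm_pos_iff.1 (hL₀.trans_lt hL)
  have hc : 0 < ‖B‖ - L := sub_pos.2 hL
  have happrox : ApproximatesLinearOn (fun x => B • x + u x) (B • ContinuousLinearMap.id 𝕜 E)
      s L.toNNReal := by
    rw [ApproximatesLinearOn]
    intro x hx y hy
    convert hu x hx y hy using 2
    · simp only [smul_apply, ContinuousLinearMap.id_apply, smul_sub]
      abel
    · exact Real.coe_toNNReal _ hL₀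
  let inv : (B • ContinuousLinearMap.id 𝕜 E).NonlinearRightInverse :=
    { toFun := fun y => B⁻¹ • y
      nnnorm := ‖B‖₊⁻¹
      bound' := fun y => by simp [norm_smul]
      right_inv' := fun y => by simp [smul_smul, hB] }
  set ρ' := dist y (B • b + u b) / (‖B‖ - L)
  have hρ' : ρ' < ρ := (div_lt_iff₀ hc).2 (by rw [mul_comm]; exact mem_ball.1 hy)
  have hy' : y ∈ closedBall (B • b + u b) (((inv.nnnorm : ℝ)⁻¹ - L.toNNReal) * ρ') := by
    simp [inv, Real.coe_toNNReal _ hL₀, ρ', mul_div_cancel₀ _ hc.ne']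
  obtain ⟨x, hx, rfl⟩ := happrox.surjOn_closedBall_of_nonlinearRightInverse inv
    (by positivity) ((closedBall_subset_ball hρ').trans hρ) hy'
  exact ⟨x, closedBall_subset_ball hρ' hx, rfl⟩

theorem ball_subset_image_smul_add [CompleteSpace E]
    (hu : ∀ x ∈ s, ∀ y ∈ s, ‖u x - u y‖ ≤ L * ‖x - y‖) (hL₀ : 0 ≤ L) (hL : L < ‖B‖)
    {ρ c : ℝ} (hρ : ball 0 ρ ⊆ s) (hu0 : ‖u 0‖ ≤ c) :
    ball 0 ((‖B‖ - L) * ρ - c) ⊆ (fun x => B • x + u x) '' s := by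
  refine (ball_subset_ball' ?_).trans ((surjOn_ball_smul_add hu hL₀ hL hρ).trans (image_mono hρ))
  rw [smul_zero, zero_add, dist_zero_left]
  linarith

theorem injOn_smul_add (hu : ∀ x ∈ s, ∀ y ∈ s, ‖u x - u y‖ ≤ L * ‖x - y‖) (hL : L < ‖B‖) :
    InjOn (fun x => B • x + u x) s := fun x hx y hy hxy => by
  have h := sub_mul_norm_sub_le_norm_smul_add_sub (B := B) hu hx hy
  rw [show B • x + u x = B • y + u y from hxy, sub_self, norm_zero] at h
  exact sub_eq_zero.1 (norm_le_zero_iff.1 (nonpos_of_mul_nonpos_right h (by linarith)))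

end SmulAddPerturbation

theorem norm_graph_sub_le {E F : Type*} [SeminormedAddCommGroup E] [SeminormedAddCommGroup F]
    {Φ : E → F} {D : Set E} {γ₀ : ℝ} (hΦ : ∀ Y₁ ∈ D, ∀ Y₂ ∈ D, ‖Φ Y₁ - Φ Y₂‖ ≤ γ₀ * ‖Y₁ - Y₂‖)
    (hγ₀ : 0 ≤ γ₀) {Y₁ Y₂ : E} (h₁ : Y₁ ∈ D) (h₂ : Y₂ ∈ D) :
    ‖(Φ Y₁, Y₁) - (Φ Y₂, Y₂)‖ ≤ (1 + γ₀) * ‖Y₁ - Y₂‖ := by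
  rw [Prod.mk_sub_mk, Prod.norm_mk]
  have hY := norm_nonneg (Y₁ - Y₂)
  exact max_le (by linarith [hΦ Y₁ h₁ Y₂ h₂]) (by nlinarith)

section CompGraph

variable {E F G : Type*} [SeminormedAddCommGroup E] [SeminormedAddCommGroup F]
  [SeminormedAddCommGroup G] {Φ : E → F} {D : Set E} {V : F × E → G} {s : Set (F × E)}
  {C γ₀ : ℝ}

theorem norm_comp_graph_sub_le (hV : ∀ p ∈ s, ∀ q ∈ s, ‖V p - V q‖ ≤ C * ‖p - q‖) (hC : 0 ≤ C)
    (hΦ : ∀ Y₁ ∈ D, ∀ Y₂ ∈ D, ‖Φ Y₁ - Φ Y₂‖ ≤ γ₀ * ‖Y₁ - Y₂‖) (hγ₀ : 0 ≤ γ₀)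
    (hgr : ∀ Y ∈ D, (Φ Y, Y) ∈ s) {Y₁ Y₂ : E} (h₁ : Y₁ ∈ D) (h₂ : Y₂ ∈ D) :
    ‖V (Φ Y₁, Y₁) - V (Φ Y₂, Y₂)‖ ≤ C * (1 + γ₀) * ‖Y₁ - Y₂‖ :=
  (hV _ (hgr _ h₁) _ (hgr _ h₂)).trans <| by
    rw [mul_assoc]
    exact mul_le_mul_of_nonneg_left (norm_graph_sub_le hΦ hγ₀ h₁ h₂) hC

theorem norm_comp_graph_le (hV : ∀ p ∈ s, ∀ q ∈ s, ‖V p - V q‖ ≤ C * ‖p - q‖) (hC : 0 ≤ C)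
    (hΦ : ∀ Y₁ ∈ D, ∀ Y₂ ∈ D, ‖Φ Y₁ - Φ Y₂‖ ≤ γ₀ * ‖Y₁ - Y₂‖) (hγ₀ : 0 ≤ γ₀)
    (hgr : ∀ Y ∈ D, (Φ Y, Y) ∈ s) (hV0 : V 0 = 0) (h0s : 0 ∈ s) (h0D : 0 ∈ D) {β : ℝ}
    (hΦ0 : ‖Φ 0‖ ≤ β) {Y : E} (hY : Y ∈ D) :
    ‖V (Φ Y, Y)‖ ≤ C * β + C * (1 + γ₀) * ‖Y‖ := by
  have h0 : ‖V (Φ 0, 0)‖ ≤ C * β := by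
    have h := hV _ (hgr 0 h0D) 0 h0s
    rw [hV0, sub_zero, sub_zero, Prod.norm_mk, norm_zero, max_eq_left (norm_nonneg _)] at h
    exact h.trans (mul_le_mul_of_nonneg_left hΦ0 hC)
  have h := norm_comp_graph_sub_le hV hC hΦ hγ₀ hgr hY h0D
  rw [sub_zero] at h
  linarith [norm_le_norm_sub_add (V (Φ Y, Y)) (V (Φ 0, 0))]

end CompGraph

theorem norm_extend_zero_le {α β E : Type*} [SeminormedAddGroup E] {f : α → β} {g : α → E}
    {b : β} {C : ℝ} (hC : 0 ≤ C) (hg : ∀ a, f a = b → ‖g a‖ ≤ C) : ‖extend f g 0 b‖ ≤ C := by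
  classical
  rw [extend_def]
  split_ifs with h
  · exact hg _ (Classical.choose_spec h)
  · simpa using hC

theorem image_pair_eq_graphOf_extend {S T : ℂ → ℂ} {D : Set ℂ} (hT : InjOn T D) :
    (fun Y => ((S Y, T Y) : ℂ × ℂ)) '' D
      = graphOf (extend (D.domRestrict T) (D.domRestrict S) 0) (T '' D) := by
  rw [graphOf, image_image]
  refine image_congr fun Y hY => ?_
  rw [show T Y = D.domRestrict T ⟨Y, hY⟩ from rfl, (injOn_iff_injective.1 hT).extend_apply]
  rfl

theorem norm_mul_add_le_of_mul_add_eq_zero {A B Y φ ρ μ : ℂ} {Dh γ₀ β : ℝ} (hB : B ≠ 0)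
    (hγ₀ : 0 < γ₀) (hDh : 0 ≤ Dh) (hβ : 0 ≤ β) (hsmall : (1 + γ₀) ^ 2 * Dh ≤ γ₀ * ‖B‖)
    (hφ : ‖φ‖ ≤ β + γ₀ * ‖Y‖) (hρ : ‖ρ‖ ≤ Dh * β + Dh * (1 + γ₀) * ‖Y‖)
    (hμ : ‖μ‖ ≤ Dh * β + Dh * (1 + γ₀) * ‖Y‖) (hY : B * Y + μ = 0) :
    ‖A * φ + ρ‖ ≤ (1 + γ₀) * (‖A‖ * β + Dh * β) := by
  have hB0 := norm_pos_iff.2 hB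
  set c := ‖B‖ - Dh * (1 + γ₀)
  have hcY : c * ‖Y‖ ≤ Dh * β := by
    have hBY : ‖B‖ * ‖Y‖ = ‖μ‖ := by rw [← norm_mul, eq_neg_of_add_eq_zero_left hY, norm_neg]
    simp only [c, sub_mul]
    linarith
  have hc : (1 + γ₀) * Dh ≤ γ₀ * c := by simp only [c]; nlinarith
  have hDhc : Dh ≤ c := by nlinarith
  have hc0 : 0 < c := by simp only [c]; nlinarith
  have key : (γ₀ * ‖A‖ + Dh * (1 + γ₀)) * ‖Y‖ ≤ γ₀ * (‖A‖ + Dh) * β := by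
    refine le_of_mul_le_mul_right ?_ hc0
    calc (γ₀ * ‖A‖ + Dh * (1 + γ₀)) * ‖Y‖ * c
        = (γ₀ * ‖A‖ + Dh * (1 + γ₀)) * (c * ‖Y‖) := by ring
      _ ≤ (γ₀ * ‖A‖ + Dh * (1 + γ₀)) * (Dh * β) := by gcongr
      _ = (γ₀ * ‖A‖ * Dh + (1 + γ₀) * Dh * Dh) * β := by ring
      _ ≤ (γ₀ * ‖A‖ * c + γ₀ * c * Dh) * β := by gcongr
      _ = γ₀ * (‖A‖ + Dh) * β * c := by ring
  calc ‖A * φ + ρ‖ ≤ ‖A‖ * ‖φ‖ + ‖ρ‖ := (norm_add_le _ _).trans_eq (by rw [norm_mul])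
    _ ≤ ‖A‖ * (β + γ₀ * ‖Y‖) + (Dh * β + Dh * (1 + γ₀) * ‖Y‖) := by gcongr
    _ = ‖A‖ * β + Dh * β + (γ₀ * ‖A‖ + Dh * (1 + γ₀)) * ‖Y‖ := by ring
    _ ≤ (1 + γ₀) * (‖A‖ * β + Dh * β) := by linarith

section GraphTransform

variable {A B : ℂ} {R U : ℂ × ℂ → ℂ} {g : ℂ × ℂ → ℂ × ℂ} {s : Set (ℂ × ℂ)} {Φ : ℂ → ℂ}
  {D : Set ℂ} {Dh γ₀ α β : ℝ}

theorem exists_graphOf_image_of_lipschitz (hg : ∀ z, g z = (A * z.1 + R z, B * z.2 + U z))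
    (hR : ∀ p ∈ s, ∀ q ∈ s, ‖R p - R q‖ ≤ Dh * ‖p - q‖)
    (hU : ∀ p ∈ s, ∀ q ∈ s, ‖U p - U q‖ ≤ Dh * ‖p - q‖) (hR0 : R 0 = 0) (hU0 : U 0 = 0)
    (h0s : 0 ∈ s) (hΦ : ∀ Y₁ ∈ D, ∀ Y₂ ∈ D, ‖Φ Y₁ - Φ Y₂‖ ≤ γ₀ * ‖Y₁ - Y₂‖)
    (hgr : graphOf Φ D ⊆ s) (hαD : ball 0 α ⊆ D) (hα : 0 < α) (hΦ0 : ‖Φ 0‖ ≤ β)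
    (hB : B ≠ 0) (hDh : 0 ≤ Dh) (hγ₀ : 0 < γ₀) (hβ : 0 ≤ β) (hL : Dh * (1 + γ₀) < ‖B‖)
    (hsmall : (1 + γ₀) ^ 2 * Dh ≤ γ₀ * ‖B‖) :
    ∃ Ψ : ℂ → ℂ,
      g '' graphOf Φ D = graphOf Ψ (Prod.snd '' (g '' graphOf Φ D)) ∧
      ball (0 : ℂ) ((‖B‖ - Dh * (1 + γ₀)) * α - Dh * β) ⊆ Prod.snd '' (g '' graphOf Φ D) ∧
      ‖Ψ 0‖ ≤ (1 + γ₀) * (‖A‖ * β + Dh * β) := by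
  have hgr' : ∀ Y ∈ D, (Φ Y, Y) ∈ s := fun Y hY => hgr (mem_image_of_mem _ hY)
  have h0D : (0 : ℂ) ∈ D := hαD (mem_ball_self hα)
  have hUlip : ∀ Y₁ ∈ D, ∀ Y₂ ∈ D,
      ‖U (Φ Y₁, Y₁) - U (Φ Y₂, Y₂)‖ ≤ Dh * (1 + γ₀) * ‖Y₁ - Y₂‖ :=
    fun _ h₁ _ h₂ => norm_comp_graph_sub_le hU hDh hΦ hγ₀.le hgr' h₁ h₂
  have hUle := fun Y (hY : Y ∈ D) => norm_comp_graph_le hU hDh hΦ hγ₀.le hgr' hU0 h0s h0D hΦ0 hY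
  have hRle := fun Y (hY : Y ∈ D) => norm_comp_graph_le hR hDh hΦ hγ₀.le hgr' hR0 h0s h0D hΦ0 hY
  set T := fun Y : ℂ => B • Y + U (Φ Y, Y)
  set S := fun Y : ℂ => A * Φ Y + R (Φ Y, Y)
  have himage : g '' graphOf Φ D = (fun Y => (S Y, T Y)) '' D := by
    rw [graphOf, image_image]
    exact image_congr fun Y _ => hg _
  have hsnd : Prod.snd '' (g '' graphOf Φ D) = T '' D := by rw [himage, image_image]
  refine ⟨extend (D.domRestrict T) (D.domRestrict S) 0, ?_, ?_, ?_⟩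
  · rw [hsnd, himage]
    exact image_pair_eq_graphOf_extend (injOn_smul_add hUlip hL)
  · rw [hsnd]
    exact ball_subset_image_smul_add hUlip (by positivity) hL hαD (by simpa using hUle 0 h0D)
  · refine norm_extend_zero_le (by positivity) fun ⟨Y, hY⟩ hTY => ?_
    have hΦY : ‖Φ Y‖ ≤ β + γ₀ * ‖Y‖ := by
      have := hΦ Y hY 0 h0D
      rw [sub_zero] at this
      linarith [norm_le_norm_sub_add (Φ Y) (Φ 0)]
    exact norm_mul_add_le_of_mul_add_eq_zero hB hγ₀ hDh hβ hsmall hΦY (hRle Y hY) (hUle Y hY) hTY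

end GraphTransform

/-- Size-control part of the graph transform theorem (Theorem 4.1): if moreover
`B(0,α) ⊆ D` and `‖Φ 0‖ ≤ β`, then — provided `‖Dh‖` is small enough depending only on
`γ₀` and `γ` — the projection to the second coordinate of `g(graph Φ)` contains the ball
`B(0, (|B| - ‖Dh‖(1+γ₀))α - |A|β - ‖Dh‖β - Mβ²)` with `M = ‖D²g‖`, and the new graph
function `Ψ` satisfies `‖Ψ 0‖ ≤ (1+γ₀)(|A|β + ‖Dh‖β + Mβ²)`. -/
theorem stmt5 (γ γ₀ : ℝ) (hγ : γ ∈ Set.Ioo (0:ℝ) 1) (hγ₀ : 0 < γ₀) :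
    ∃ ε : ℝ, 0 < ε ∧
      ∀ (A B : ℂ), A ≠ 0 → B ≠ 0 →
      ∀ (r Dh α β M : ℝ), 0 < r → 0 ≤ Dh → 0 < α → 0 ≤ β → 0 ≤ M →
      γ ≤ ‖A‖ → ‖A‖ ≤ ‖B‖ * (1 - γ) →
      ∀ (R U : ℂ × ℂ → ℂ),
        ContDiffOn ℂ 2 R (ball 0 r) → ContDiffOn ℂ 2 U (ball 0 r) →
        R 0 = 0 → U 0 = 0 →
      ∀ g : ℂ × ℂ → ℂ × ℂ, (∀ z, g z = (A * z.1 + R z, B * z.2 + U z)) →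
        (∀ z ∈ ball (0 : ℂ × ℂ) r, ‖fderiv ℂ R z‖ ≤ Dh ∧ ‖fderiv ℂ U z‖ ≤ Dh) →
        Dh * ‖B‖⁻¹ * (1 + γ₀) < 1 →
        (∀ z ∈ ball (0 : ℂ × ℂ) r, ‖iteratedFDeriv ℂ 2 g z‖ ≤ M) →
      ∀ (Φ : ℂ → ℂ) (D : Set ℂ),
        (∀ Y₁ ∈ D, ∀ Y₂ ∈ D, ‖Φ Y₁ - Φ Y₂‖ ≤ γ₀ * ‖Y₁ - Y₂‖) →
        graphOf Φ D ⊆ ball 0 r →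
        ball (0 : ℂ) α ⊆ D → ‖Φ 0‖ ≤ β →
        Dh ≤ ε →
      ∃ Ψ : ℂ → ℂ,
        g '' graphOf Φ D = graphOf Ψ (Prod.snd '' (g '' graphOf Φ D)) ∧
        ball (0 : ℂ) ((‖B‖ - Dh * (1 + γ₀)) * α - ‖A‖ * β - Dh * β - M * β ^ 2)
          ⊆ Prod.snd '' (g '' graphOf Φ D) ∧
        ‖Ψ 0‖ ≤ (1 + γ₀) * (‖A‖ * β + Dh * β + M * β ^ 2) := by
  -- Since `‖B‖ ≥ ‖A‖ ≥ γ`, this `ε` gives `(1 + γ₀)² Dh ≤ γ₀ ‖B‖`.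
  refine ⟨γ * γ₀ / (1 + γ₀) ^ 2, by have := hγ.1; positivity, ?_⟩
  intro A B _ hB r Dh α β M hr hDh hα hβ hM hγA hAB R U hRc hUc hR0 hU0 g hg hDb hL _
    Φ D hΦ hgr hαD hΦ0 hDhε
  have hsmall : (1 + γ₀) ^ 2 * Dh ≤ γ₀ * ‖B‖ := by
    have hγB : γ ≤ ‖B‖ :=
      hγA.trans (hAB.trans (mul_le_of_le_one_right (norm_nonneg _) (by linarith [hγ.1])))
    rw [le_div_iff₀ (by positivity)] at hDhε
    nlinarith
  rw [mul_right_comm, mul_inv_lt_iff₀ (norm_pos_iff.2 hB), one_mul] at hL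
  have hR := hRc.norm_sub_le_of_norm_fderiv_le two_ne_zero isOpen_ball (convex_ball _ _)
    fun z hz => (hDb z hz).1
  have hU := hUc.norm_sub_le_of_norm_fderiv_le two_ne_zero isOpen_ball (convex_ball _ _)
    fun z hz => (hDb z hz).2
  obtain ⟨Ψ, hgraph, hball, hΨ0⟩ := exists_graphOf_image_of_lipschitz hg hR hU hR0 hU0
    (mem_ball_self hr) hΦ hgr hαD hα hΦ0 hB hDh hγ₀ hβ hL hsmall
  refine ⟨Ψ, hgraph, (ball_subset_ball ?_).trans hball, hΨ0.trans ?_⟩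
  · nlinarith [norm_nonneg A]
  · exact mul_le_mul_of_nonneg_left (le_add_of_nonneg_right (by positivity)) (by positivity)
end
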